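/- Let H be a d-uniform hypergraph (d ≥ 2) on the vertex set {x_{ji} : 1 ≤ j ≤ n, 1 ≤ i ≤ d} (with these nd vertices distinct) such that {{x_{j1}, x_{j2}, …, x_{jd}} : 1 ≤ j ≤ n} is a perfect matching of H. Suppose that for every 1 ≤ q ≤ n, whenever 𝔢_1 and 𝔢_2 are submaximal edges of H with 𝔢_1 ∼ x_{q i_1} and 𝔢_2 ∼ x_{q i_2} for distinct indices i_1, i_2 in {1, …, d}, the set 𝔢_1 ∪ 𝔢_2 is not independent. Then every minimal vertex cover of H contains exactly one vertex of each matching hyperedge {x_{q1}, x_{q2}, …, x_{qd}}, and hence every minimal vertex cover of H has cardinality n. -/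

import Mathlib

/-- `C` is a vertex cover of the hypergraph `H`: it meets every hyperedge. -/
def IsVertexCover {V : Type*} [DecidableEq V] (H : Finset (Finset V)) (C : Finset V) : Prop :=
  ∀ e ∈ H, (e ∩ C).Nonempty

/-- `C` is a minimal vertex cover of `H`. -/
def IsMinimalVertexCover {V : Type*} [DecidableEq V] (H : Finset (Finset V)) (C : Finset V) :
    Prop :=
  IsVertexCover H C ∧ ∀ C' ⊂ C, ¬ IsVertexCover H C'

/-- `M` is an independent set of `H`: it contains no hyperedge. -/
def IsIndependent {V : Type*} (H : Finset (Finset V)) (M : Finset V) : Prop :=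
  ∀ e ∈ H, ¬ e ⊆ M

/-- `𝔢` is a submaximal edge of the `d`-uniform hypergraph `H`: a `(d-1)`-element
subset of some hyperedge. -/
def IsSubmaximalEdge {V : Type*} (H : Finset (Finset V)) (d : ℕ) (𝔢 : Finset V) : Prop :=
  (∃ e ∈ H, 𝔢 ⊆ e) ∧ 𝔢.card = d - 1

/-!
Every vertex `v` of a minimal vertex cover `C` has a private hyperedge `e` with `e ∩ C = {v}`, so
`e \ {v}` is a submaximal edge attached to `v` and disjoint from `C`. If `C` contained two vertices
of one row, the union of their two such submaximal edges would avoid the cover `C`, hence be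
independent, contradicting the hypothesis. Each row is itself a hyperedge and so meets `C`; hence
`C` meets every row exactly once, and the rows partition the vertex set.
-/

open Finset

variable {V : Type*} [DecidableEq V] {H : Finset (Finset V)} {C : Finset V}

theorem IsVertexCover.isIndependent_of_disjoint (hC : IsVertexCover H C) {M : Finset V}
    (hM : Disjoint M C) : IsIndependent H M := fun e he heM => by
  obtain ⟨x, hx⟩ := hC e he
  rw [mem_inter] at hx
  exact disjoint_left.1 hM (heM hx.1) hx.2

theorem IsMinimalVertexCover.exists_inter_eq_singleton (hC : IsMinimalVertexCover H C) {v : V}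
    (hv : v ∈ C) : ∃ e ∈ H, e ∩ C = {v} := by
  have hnot : ¬ IsVertexCover H (C.erase v) := hC.2 _ (erase_ssubset hv)
  simp only [IsVertexCover, not_forall, not_nonempty_iff_eq_empty, inter_erase,
    erase_eq_empty_iff] at hnot
  obtain ⟨e, he, hempty⟩ := hnot
  exact ⟨e, he, hempty.resolve_left (hC.1 e he).ne_empty⟩

theorem isSubmaximalEdge_erase {d : ℕ} {e : Finset V} (he : e ∈ H) (hcard : e.card = d) {v : V}
    (hv : v ∈ e) : IsSubmaximalEdge H d (e.erase v) :=
  ⟨⟨e, he, erase_subset v e⟩, by rw [card_erase_of_mem hv, hcard]⟩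

theorem IsMinimalVertexCover.exists_isSubmaximalEdge_disjoint {d : ℕ}
    (huniform : ∀ e ∈ H, e.card = d) (hC : IsMinimalVertexCover H C) {v : V} (hv : v ∈ C) :
    ∃ 𝔢, IsSubmaximalEdge H d 𝔢 ∧ insert v 𝔢 ∈ H ∧ Disjoint 𝔢 C := by
  obtain ⟨e, he, hinter⟩ := hC.exists_inter_eq_singleton hv
  have hve : v ∈ e := (mem_inter.1 (hinter ▸ mem_singleton_self v)).1
  refine ⟨e.erase v, isSubmaximalEdge_erase he (huniform e he) hve, by rwa [insert_erase hve], ?_⟩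
  rw [disjoint_iff_inter_eq_empty, erase_inter, hinter, erase_singleton]

theorem card_eq_of_forall_card_inter_row_eq_one {α β : Type*} [Fintype α] [Fintype β]
    [DecidableEq α] [DecidableEq β] (C : Finset (α × β))
    (hrow : ∀ q : α, (C ∩ univ.image (fun i : β => (q, i))).card = 1) :
    C.card = Fintype.card α := by
  rw [card_eq_sum_card_fiberwise (f := Prod.fst) (t := univ) fun _ _ => mem_coe.2 (mem_univ _)]
  have hfiber (q : α) : {v ∈ C | v.1 = q} = C ∩ univ.image (fun i : β => (q, i)) := by
    ext ⟨p, i⟩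
    simp [and_comm, eq_comm]
  simp [hfiber, hrow]

theorem minimalVertexCover_one_per_row_general {n d : ℕ}
    (H : Finset (Finset (Fin n × Fin d)))
    -- `H` is `d`-uniform
    (huniform : ∀ e ∈ H, e.card = d)
    -- the rows `{(j, 1), …, (j, d)}` are hyperedges (they form a perfect matching)
    (hmatching : ∀ j : Fin n, Finset.univ.image (fun i : Fin d => (j, i)) ∈ H)
    (hcond : ∀ q : Fin n, ∀ i₁ i₂ : Fin d, i₁ ≠ i₂ →
      ∀ 𝔢₁ 𝔢₂ : Finset (Fin n × Fin d),
        IsSubmaximalEdge H d 𝔢₁ → IsSubmaximalEdge H d 𝔢₂ →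
        insert (q, i₁) 𝔢₁ ∈ H → insert (q, i₂) 𝔢₂ ∈ H →
        ¬ IsIndependent H (𝔢₁ ∪ 𝔢₂)) :
    ∀ C : Finset (Fin n × Fin d), IsMinimalVertexCover H C →
      (∀ q : Fin n, (C ∩ Finset.univ.image (fun i : Fin d => (q, i))).card = 1) ∧
      C.card = n := by
  intro C hC
  have hrow (q : Fin n) : (C ∩ univ.image (fun i : Fin d => (q, i))).card = 1 := by
    refine le_antisymm (card_le_one.2 ?_) (Nonempty.card_pos ?_)
    · simp only [mem_inter, mem_image, mem_univ, true_and]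
      rintro _ ⟨ha, i, rfl⟩ _ ⟨hb, j, rfl⟩
      by_contra hij
      obtain ⟨𝔢₁, hsub₁, hedge₁, hdisj₁⟩ := hC.exists_isSubmaximalEdge_disjoint huniform ha
      obtain ⟨𝔢₂, hsub₂, hedge₂, hdisj₂⟩ := hC.exists_isSubmaximalEdge_disjoint huniform hb
      exact hcond q i j (fun h => hij (h ▸ rfl)) 𝔢₁ 𝔢₂ hsub₁ hsub₂ hedge₁ hedge₂
        (hC.1.isIndependent_of_disjoint (disjoint_union_left.2 ⟨hdisj₁, hdisj₂⟩))
    · rw [inter_comm]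
      exact hC.1 _ (hmatching q)
  exact ⟨hrow, by simpa using card_eq_of_forall_card_inter_row_eq_one C hrow⟩

/-- let `H` be a `d`-uniform hypergraph (`d ≥ 2`) on the vertex set
`{x_{ji} = (j, i)}` such that the rows `{x_{j1}, …, x_{jd}}` form a perfect matching.
If for every `q`, whenever `𝔢₁ ∼ x_{q i₁}` and `𝔢₂ ∼ x_{q i₂}` for submaximal edges
`𝔢₁, 𝔢₂` and distinct `i₁, i₂`, the set `𝔢₁ ∪ 𝔢₂` is not independent, then every
minimal vertex cover of `H` contains exactly one vertex of each matching hyperedge,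
and hence has cardinality `n`. -/
theorem minimalVertexCover_one_per_row {n d : ℕ} (hd : 2 ≤ d)
    (H : Finset (Finset (Fin n × Fin d)))
    -- every vertex lies in some hyperedge (the union of the hyperedges is the vertex set)
    (hunion : ∀ v : Fin n × Fin d, ∃ e ∈ H, v ∈ e)
    -- `H` is `d`-uniform
    (huniform : ∀ e ∈ H, e.card = d)
    -- the rows `{(j, 1), …, (j, d)}` are hyperedges (they form a perfect matching)
    (hmatching : ∀ j : Fin n, Finset.univ.image (fun i : Fin d => (j, i)) ∈ H)
    (hcond : ∀ q : Fin n, ∀ i₁ i₂ : Fin d, i₁ ≠ i₂ →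
      ∀ 𝔢₁ 𝔢₂ : Finset (Fin n × Fin d),
        IsSubmaximalEdge H d 𝔢₁ → IsSubmaximalEdge H d 𝔢₂ →
        insert (q, i₁) 𝔢₁ ∈ H → insert (q, i₂) 𝔢₂ ∈ H →
        ¬ IsIndependent H (𝔢₁ ∪ 𝔢₂)) :
    ∀ C : Finset (Fin n × Fin d), IsMinimalVertexCover H C →
      (∀ q : Fin n, (C ∩ Finset.univ.image (fun i : Fin d => (q, i))).card = 1) ∧
      C.card = n :=
  minimalVertexCover_one_per_row_general H huniform hmatching hcond
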